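/- The ℂ-linear map Δ̃ : H → H ⊗_ℂ H determined by Δ̃(a ⊗ q ⊗ b) = Σ (a ⊗ q₍₁₎ ⊗ 1) ⊗ (1 ⊗ q₍₂₎ ⊗ b) is coassociative, i.e. (Δ̃ ⊗ id)Δ̃ = (id ⊗ Δ̃)Δ̃, and is a unital homomorphism of ℂ-algebras, where H ⊗_ℂ H carries the factorwise multiplication. (This is the common ℂ-linear lift of both the left coproduct Δ_l and the right coproduct Δ_r of the Connes–Moscovici Hopf algebroid.) -/
import Mathlib


open TensorProduct
set_option maxHeartbeats 1000000
set_option synthInstance.maxHeartbeats 200000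

noncomputable section

/-- `(id ⊗ Δ) ∘ Δ : Q → Q ⊗ (Q ⊗ Q)`, producing the Sweedler legs
`q₍₁₎ ⊗ q₍₂₎ ⊗ q₍₃₎` of the iterated coproduct. -/
def comul2 (Q : Type*) [Ring Q] [HopfAlgebra ℂ Q] :
    Q →ₗ[ℂ] Q ⊗[ℂ] (Q ⊗[ℂ] Q) :=
  (LinearMap.lTensor Q (Coalgebra.comul (R := ℂ))).comp (Coalgebra.comul (R := ℂ))

/-- The right-hand side `Σ a (q₍₁₎·a') ⊗ q₍₂₎ q' ⊗ (q₍₃₎·b') b` of the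
Connes–Moscovici product formula on `H = A ⊗ Q ⊗ A`. -/
def cmMulRHS {Q A : Type*} [Ring Q] [HopfAlgebra ℂ Q] [Ring A] [Algebra ℂ A]
    (act : Q →ₗ[ℂ] A →ₗ[ℂ] A) (a : A) (q : Q) (b : A) (a' : A) (q' : Q) (b' : A) :
    A ⊗[ℂ] (Q ⊗[ℂ] A) :=
  TensorProduct.map ((LinearMap.mulLeft ℂ a).comp (act.flip a'))
    (TensorProduct.map (LinearMap.mulRight ℂ q')
      ((LinearMap.mulRight ℂ b).comp (act.flip b')))
    (comul2 Q q)

/-- The linear map `Q →ₗ H`, `x ↦ a ⊗ x ⊗ 1`. -/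
def cmLegL {Q A : Type*} [Ring Q] [HopfAlgebra ℂ Q] [Ring A] [Algebra ℂ A] (a : A) :
    Q →ₗ[ℂ] A ⊗[ℂ] (Q ⊗[ℂ] A) :=
  (TensorProduct.mk ℂ A (Q ⊗[ℂ] A) a).comp ((TensorProduct.mk ℂ Q A).flip 1)

/-- The linear map `Q →ₗ H`, `x ↦ 1 ⊗ x ⊗ b`. -/
def cmLegR {Q A : Type*} [Ring Q] [HopfAlgebra ℂ Q] [Ring A] [Algebra ℂ A] (b : A) :
    Q →ₗ[ℂ] A ⊗[ℂ] (Q ⊗[ℂ] A) :=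
  (TensorProduct.mk ℂ A (Q ⊗[ℂ] A) 1).comp ((TensorProduct.mk ℂ Q A).flip b)

/-- `Σ (a ⊗ q₍₁₎ ⊗ 1) ⊗ (1 ⊗ q₍₂₎ ⊗ b)`, the value of the coproduct lift `Δ̃`. -/
def cmComulRHS {Q A : Type*} [Ring Q] [HopfAlgebra ℂ Q] [Ring A] [Algebra ℂ A]
    (a : A) (q : Q) (b : A) :
    (A ⊗[ℂ] (Q ⊗[ℂ] A)) ⊗[ℂ] (A ⊗[ℂ] (Q ⊗[ℂ] A)) :=
  TensorProduct.map (cmLegL a) (cmLegR b) (Coalgebra.comul (R := ℂ) q)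

/-! ### Auxiliary development -/

namespace CMaux

variable {Q A : Type*} [Ring Q] [HopfAlgebra ℂ Q] [Ring A] [Algebra ℂ A]

@[simp] lemma cmLegL_apply (a : A) (x : Q) :
    cmLegL (A := A) a x = a ⊗ₜ[ℂ] (x ⊗ₜ[ℂ] (1:A)) := rfl

@[simp] lemma cmLegR_apply (b : A) (x : Q) :
    cmLegR (A := A) b x = (1:A) ⊗ₜ[ℂ] (x ⊗ₜ[ℂ] b) := rfl

lemma cmLegR_one : cmLegR (Q := Q) (A := A) 1 = cmLegL 1 := rfl

/-- Structural assembly map `a ⊗ ((x ⊗ y) ⊗ b) ↦ (a ⊗ x ⊗ 1) ⊗ (1 ⊗ y ⊗ b)`. -/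
def cmTheta (Q A : Type*) [Ring Q] [HopfAlgebra ℂ Q] [Ring A] [Algebra ℂ A] :
    (A ⊗[ℂ] ((Q ⊗[ℂ] Q) ⊗[ℂ] A)) →ₗ[ℂ] (A ⊗[ℂ] (Q ⊗[ℂ] A)) ⊗[ℂ] (A ⊗[ℂ] (Q ⊗[ℂ] A)) :=
  (TensorProduct.map (LinearMap.lTensor A ((TensorProduct.mk ℂ Q A).flip 1))
      (TensorProduct.mk ℂ A (Q ⊗[ℂ] A) 1)) ∘ₗ
    (TensorProduct.assoc ℂ A Q (Q ⊗[ℂ] A)).symm.toLinearMap ∘ₗ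
      LinearMap.lTensor A (TensorProduct.assoc ℂ Q Q A).toLinearMap

@[simp] lemma cmTheta_tmul (a : A) (x y : Q) (b : A) :
    cmTheta Q A (a ⊗ₜ[ℂ] ((x ⊗ₜ[ℂ] y) ⊗ₜ[ℂ] b)) =
      (a ⊗ₜ[ℂ] (x ⊗ₜ[ℂ] (1:A))) ⊗ₜ[ℂ] ((1:A) ⊗ₜ[ℂ] (y ⊗ₜ[ℂ] b)) := by
  simp [cmTheta]

lemma cmTheta_apply (a b : A) (t : Q ⊗[ℂ] Q) :
    cmTheta Q A (a ⊗ₜ[ℂ] (t ⊗ₜ[ℂ] b)) = TensorProduct.map (cmLegL a) (cmLegR b) t := by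
  induction t using TensorProduct.induction_on with
  | zero => rw [zero_tmul, tmul_zero, map_zero, map_zero]
  | tmul x y => simp
  | add s t hs ht => simp only [add_tmul, tmul_add, map_add, hs, ht]

variable (D : (A ⊗[ℂ] (Q ⊗[ℂ] A)) →ₗ[ℂ] (A ⊗[ℂ] (Q ⊗[ℂ] A)) ⊗[ℂ] (A ⊗[ℂ] (Q ⊗[ℂ] A)))

lemma D_eq
    (hD : ∀ (a : A) (q : Q) (b : A), D (a ⊗ₜ[ℂ] (q ⊗ₜ[ℂ] b)) = cmComulRHS a q b) :
    D = (cmTheta Q A) ∘ₗ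
      LinearMap.lTensor A (LinearMap.rTensor A (Coalgebra.comul (R := ℂ))) := by
  ext a q b
  simp [hD, cmComulRHS, cmTheta_apply]


/-- `q ↦ ε(q)·1 : Q → A`. -/
def cmKappa (Q A : Type*) [Ring Q] [HopfAlgebra ℂ Q] [Ring A] [Algebra ℂ A] :
    Q →ₗ[ℂ] A :=
  (Algebra.linearMap ℂ A).comp (Coalgebra.counit (R := ℂ))

@[simp] lemma cmKappa_apply (q : Q) :
    cmKappa Q A q = Coalgebra.counit (R := ℂ) q • (1 : A) := by
  simp [cmKappa, Algebra.algebraMap_eq_smul_one]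

section counit
variable {N : Type*} [AddCommGroup N] [Module ℂ N]

lemma counit_left (V : Q →ₗ[ℂ] N) :
    (TensorProduct.map (cmKappa Q A) V) ∘ₗ (Coalgebra.comul (R := ℂ)) =
      (TensorProduct.mk ℂ A N 1) ∘ₗ V := by
  have d1 : TensorProduct.map (cmKappa Q A) V =
      (TensorProduct.map (Algebra.linearMap ℂ A) V) ∘ₗ
        LinearMap.rTensor Q (Coalgebra.counit (R := ℂ)) := by
    ext x y; simp [cmKappa]
  rw [d1, LinearMap.comp_assoc, Coalgebra.rTensor_counit_comp_comul]
  ext q; simp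

lemma counit_right (V : Q →ₗ[ℂ] N) :
    (TensorProduct.map V (cmKappa Q A)) ∘ₗ (Coalgebra.comul (R := ℂ)) =
      ((TensorProduct.mk ℂ N A).flip 1) ∘ₗ V := by
  have d1 : TensorProduct.map V (cmKappa Q A) =
      (TensorProduct.map V (Algebra.linearMap ℂ A)) ∘ₗ
        LinearMap.lTensor Q (Coalgebra.counit (R := ℂ)) := by
    ext x y; simp [cmKappa]
  rw [d1, LinearMap.comp_assoc, Coalgebra.lTensor_counit_comp_comul]
  ext q; simp

end counit

section act
variable (act : Q →ₗ[ℂ] A →ₗ[ℂ] A)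
  (hact_alg_one : ∀ q : Q, act q 1 = Coalgebra.counit (R := ℂ) q • (1 : A))
  (m : (A ⊗[ℂ] (Q ⊗[ℂ] A)) →ₗ[ℂ] (A ⊗[ℂ] (Q ⊗[ℂ] A)) →ₗ[ℂ] (A ⊗[ℂ] (Q ⊗[ℂ] A)))
  (hm : ∀ (a : A) (q : Q) (b a' : A) (q' : Q) (b' : A),
      m (a ⊗ₜ[ℂ] (q ⊗ₜ[ℂ] b)) (a' ⊗ₜ[ℂ] (q' ⊗ₜ[ℂ] b')) = cmMulRHS act a q b a' q' b')

include hact_alg_one hm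

lemma E1 (a a' : A) (x u : Q) :
    m (a ⊗ₜ[ℂ] (x ⊗ₜ[ℂ] (1:A))) (a' ⊗ₜ[ℂ] (u ⊗ₜ[ℂ] (1:A))) =
      TensorProduct.map ((LinearMap.mulLeft ℂ a) ∘ₗ act.flip a')
        (((TensorProduct.mk ℂ Q A).flip 1) ∘ₗ LinearMap.mulRight ℂ u)
        (Coalgebra.comul (R := ℂ) x) := by
  rw [hm]
  unfold cmMulRHS comul2
  have hone : (LinearMap.mulRight ℂ (1:A)) ∘ₗ act.flip (1:A) = cmKappa Q A := by
    ext q; simp [hact_alg_one]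
  rw [show (LinearMap.mulRight ℂ (1:A)).comp (act.flip (1:A)) = cmKappa Q A from hone,
    LinearMap.comp_apply,
    ← LinearMap.comp_apply (g := LinearMap.lTensor Q _), LinearMap.map_comp_lTensor,
    counit_right]

lemma E2 (b b' : A) (y v : Q) :
    m ((1:A) ⊗ₜ[ℂ] (y ⊗ₜ[ℂ] b)) ((1:A) ⊗ₜ[ℂ] (v ⊗ₜ[ℂ] b')) =
      (1:A) ⊗ₜ[ℂ] (TensorProduct.map (LinearMap.mulRight ℂ v)
        ((LinearMap.mulRight ℂ b) ∘ₗ act.flip b') (Coalgebra.comul (R := ℂ) y)) := by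
  rw [hm]
  unfold cmMulRHS comul2
  have hone : (LinearMap.mulLeft ℂ (1:A)) ∘ₗ act.flip (1:A) = cmKappa Q A := by
    ext q; simp [hact_alg_one]
  rw [show (LinearMap.mulLeft ℂ (1:A)).comp (act.flip (1:A)) = cmKappa Q A from hone,
    LinearMap.comp_apply,
    ← LinearMap.comp_apply (g := LinearMap.lTensor Q _), LinearMap.map_comp_lTensor,
    ← LinearMap.comp_apply (g := Coalgebra.comul), counit_left]
  rfl

end act

/-- Shuffle `(w ⊗ x) ⊗ (y ⊗ z) ↦ f w ⊗ ((x ⊗ y) ⊗ h z)`. -/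
def cmXi (f h : Q →ₗ[ℂ] A) :
    ((Q ⊗[ℂ] Q) ⊗[ℂ] (Q ⊗[ℂ] Q)) →ₗ[ℂ] A ⊗[ℂ] ((Q ⊗[ℂ] Q) ⊗[ℂ] A) :=
  TensorProduct.map f (TensorProduct.map LinearMap.id h) ∘ₗ
    LinearMap.lTensor Q (TensorProduct.assoc ℂ Q Q Q).symm.toLinearMap ∘ₗ
      (TensorProduct.assoc ℂ Q Q (Q ⊗[ℂ] Q)).toLinearMap

@[simp] lemma cmXi_tmul (f h : Q →ₗ[ℂ] A) (w x y z : Q) :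
    cmXi f h ((w ⊗ₜ[ℂ] x) ⊗ₜ[ℂ] (y ⊗ₜ[ℂ] z)) =
      f w ⊗ₜ[ℂ] ((x ⊗ₜ[ℂ] y) ⊗ₜ[ℂ] h z) := by
  simp [cmXi]

/-- Assembly computation for pure `s = u ⊗ v`. -/
lemma cmAsm (f h : Q →ₗ[ℂ] A) (u v : Q) (t₁ t₂ : Q ⊗[ℂ] Q) :
    cmTheta Q A
        (LinearMap.lTensor A (LinearMap.rTensor A (LinearMap.mulRight ℂ (u ⊗ₜ[ℂ] v)))
          (cmXi f h (t₁ ⊗ₜ[ℂ] t₂))) =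
      (TensorProduct.map f (((TensorProduct.mk ℂ Q A).flip 1) ∘ₗ LinearMap.mulRight ℂ u) t₁)
        ⊗ₜ[ℂ] ((1:A) ⊗ₜ[ℂ] (TensorProduct.map (LinearMap.mulRight ℂ v) h t₂)) := by
  induction t₁ using TensorProduct.induction_on with
  | zero => rw [zero_tmul, map_zero, map_zero, map_zero, map_zero, zero_tmul]
  | add s t hs ht =>
      rw [add_tmul, map_add, map_add, map_add, hs, ht, map_add, add_tmul]
  | tmul w x =>
    induction t₂ using TensorProduct.induction_on with
    | zero => rw [tmul_zero, map_zero, map_zero, map_zero, map_zero, tmul_zero, tmul_zero]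
    | add s t hs ht =>
        rw [tmul_add, map_add, map_add, map_add, hs, ht, map_add, tmul_add, tmul_add, ← tmul_add]
    | tmul y z =>
        simp [Algebra.TensorProduct.tmul_mul_tmul]

/-- Four-leg coassociativity. -/
lemma cmFourLeg (q : Q) :
    (TensorProduct.assoc ℂ Q Q (Q ⊗[ℂ] Q)).symm
        (LinearMap.lTensor Q (TensorProduct.assoc ℂ Q Q Q).toLinearMap
          (LinearMap.lTensor Q (LinearMap.rTensor Q (Coalgebra.comul (R := ℂ)))
            (comul2 Q q))) =
      TensorProduct.map (Coalgebra.comul (R := ℂ)) (Coalgebra.comul (R := ℂ))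
        (Coalgebra.comul (R := ℂ) q) := by
  unfold comul2
  rw [LinearMap.comp_apply, ← LinearMap.lTensor_comp_apply, ← LinearMap.lTensor_comp_apply]
  rw [show ((TensorProduct.assoc ℂ Q Q Q).toLinearMap ∘ₗ
        LinearMap.rTensor Q (Coalgebra.comul (R := ℂ))) ∘ₗ Coalgebra.comul (R := ℂ) =
      LinearMap.lTensor Q (Coalgebra.comul (R := ℂ)) ∘ₗ Coalgebra.comul (R := ℂ) from by
    rw [LinearMap.comp_assoc]; exact Coalgebra.coassoc]
  rw [LinearMap.lTensor_comp_apply]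
  have hnat := TensorProduct.map_map_assoc_symm (R := ℂ) (LinearMap.id (M := Q))
    (LinearMap.id (M := Q)) (Coalgebra.comul (R := ℂ) (A := Q))
    (LinearMap.lTensor Q (Coalgebra.comul (R := ℂ)) (Coalgebra.comul q))
  rw [show LinearMap.lTensor Q (LinearMap.lTensor Q (Coalgebra.comul (R := ℂ))) =
      TensorProduct.map LinearMap.id
        (TensorProduct.map LinearMap.id (Coalgebra.comul (R := ℂ))) from rfl,
    ← hnat, Coalgebra.coassoc_symm_apply, TensorProduct.map_id]
  rw [show TensorProduct.map (LinearMap.id (M := Q ⊗[ℂ] Q)) (Coalgebra.comul (R := ℂ)) =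
      LinearMap.lTensor (Q ⊗[ℂ] Q) (Coalgebra.comul (R := ℂ)) from rfl,
    ← LinearMap.comp_apply, LinearMap.lTensor_comp_rTensor]

lemma cmXi_fourleg (f h : Q →ₗ[ℂ] A) (q : Q) :
    cmXi f h (TensorProduct.map (Coalgebra.comul (R := ℂ)) (Coalgebra.comul (R := ℂ))
        (Coalgebra.comul (R := ℂ) q)) =
      TensorProduct.map f (TensorProduct.map (Coalgebra.comul (R := ℂ)) h) (comul2 Q q) := by
  rw [← cmFourLeg q]
  unfold cmXi
  simp only [LinearMap.comp_apply, LinearEquiv.coe_coe, LinearEquiv.apply_symm_apply]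
  rw [← LinearMap.lTensor_comp_apply,
    show (TensorProduct.assoc ℂ Q Q Q).symm.toLinearMap ∘ₗ
        (TensorProduct.assoc ℂ Q Q Q).toLinearMap = LinearMap.id from
      LinearMap.ext fun z => by simp,
    LinearMap.lTensor_id, LinearMap.id_apply,
    ← LinearMap.comp_apply (g := LinearMap.lTensor Q _), LinearMap.map_comp_lTensor,
    LinearMap.map_comp_rTensor, LinearMap.id_comp]

section keys
variable (act : Q →ₗ[ℂ] A →ₗ[ℂ] A)
  (D : (A ⊗[ℂ] (Q ⊗[ℂ] A)) →ₗ[ℂ] (A ⊗[ℂ] (Q ⊗[ℂ] A)) ⊗[ℂ] (A ⊗[ℂ] (Q ⊗[ℂ] A)))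

lemma LHSkey
    (hD : ∀ (a : A) (q : Q) (b : A), D (a ⊗ₜ[ℂ] (q ⊗ₜ[ℂ] b)) = cmComulRHS a q b)
    (a b a' b' : A) (q q' : Q) :
    D (cmMulRHS act a q b a' q' b') =
      cmTheta Q A (LinearMap.lTensor A (LinearMap.rTensor A
          (LinearMap.mulRight ℂ (Coalgebra.comul (R := ℂ) q')))
        (cmXi ((LinearMap.mulLeft ℂ a) ∘ₗ act.flip a')
          ((LinearMap.mulRight ℂ b) ∘ₗ act.flip b')
          (TensorProduct.map (Coalgebra.comul (R := ℂ)) (Coalgebra.comul (R := ℂ))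
            (Coalgebra.comul (R := ℂ) q)))) := by
  have hmulc : (Coalgebra.comul (R := ℂ)) ∘ₗ LinearMap.mulRight ℂ q' =
      (LinearMap.mulRight ℂ (Coalgebra.comul (R := ℂ) q')) ∘ₗ
        (Coalgebra.comul (R := ℂ) (A := Q)) := by
    ext x; simp
  rw [D_eq D hD, LinearMap.comp_apply]
  unfold cmMulRHS
  rw [cmXi_fourleg]
  congr 1
  simp only [← LinearMap.comp_apply, ← LinearMap.comp_assoc, LinearMap.lTensor_comp_map,
    LinearMap.rTensor_comp_map, hmulc]

variable (hact_alg_one : ∀ q : Q, act q 1 = Coalgebra.counit (R := ℂ) q • (1 : A))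
  (m : (A ⊗[ℂ] (Q ⊗[ℂ] A)) →ₗ[ℂ] (A ⊗[ℂ] (Q ⊗[ℂ] A)) →ₗ[ℂ] (A ⊗[ℂ] (Q ⊗[ℂ] A)))
  (hm : ∀ (a : A) (q : Q) (b a' : A) (q' : Q) (b' : A),
      m (a ⊗ₜ[ℂ] (q ⊗ₜ[ℂ] b)) (a' ⊗ₜ[ℂ] (q' ⊗ₜ[ℂ] b')) = cmMulRHS act a q b a' q' b')
  (M₂ : ((A ⊗[ℂ] (Q ⊗[ℂ] A)) ⊗[ℂ] (A ⊗[ℂ] (Q ⊗[ℂ] A))) →ₗ[ℂ]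
        ((A ⊗[ℂ] (Q ⊗[ℂ] A)) ⊗[ℂ] (A ⊗[ℂ] (Q ⊗[ℂ] A))) →ₗ[ℂ]
        ((A ⊗[ℂ] (Q ⊗[ℂ] A)) ⊗[ℂ] (A ⊗[ℂ] (Q ⊗[ℂ] A))))
  (hM₂ : ∀ x y z w : A ⊗[ℂ] (Q ⊗[ℂ] A),
      M₂ (x ⊗ₜ[ℂ] y) (z ⊗ₜ[ℂ] w) = (m x z) ⊗ₜ[ℂ] (m y w))

include hact_alg_one hm hM₂ in
lemma RHSkey (a b a' b' : A) (t s : Q ⊗[ℂ] Q) :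
    M₂ (TensorProduct.map (cmLegL a) (cmLegR b) t)
        (TensorProduct.map (cmLegL a') (cmLegR b') s) =
      cmTheta Q A (LinearMap.lTensor A (LinearMap.rTensor A (LinearMap.mulRight ℂ s))
        (cmXi ((LinearMap.mulLeft ℂ a) ∘ₗ act.flip a')
          ((LinearMap.mulRight ℂ b) ∘ₗ act.flip b')
          (TensorProduct.map (Coalgebra.comul (R := ℂ)) (Coalgebra.comul (R := ℂ)) t))) := by
  induction t using TensorProduct.induction_on with
  | zero => simp
  | add t₁ t₂ h₁ h₂ => simp only [map_add, LinearMap.add_apply, h₁, h₂]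
  | tmul x y =>
    induction s using TensorProduct.induction_on with
    | zero =>
        rw [show LinearMap.mulRight ℂ (0 : Q ⊗[ℂ] Q) = 0 from
          LinearMap.ext fun z => mul_zero z]
        simp [LinearMap.rTensor_zero, LinearMap.lTensor_zero]
    | add s₁ s₂ h₁ h₂ =>
        rw [show LinearMap.mulRight ℂ (s₁ + s₂) =
            LinearMap.mulRight ℂ s₁ + LinearMap.mulRight ℂ s₂ from
          LinearMap.ext fun z => mul_add z s₁ s₂] at *
        simp only [map_add, LinearMap.add_apply, LinearMap.rTensor_add,
          LinearMap.lTensor_add, h₁, h₂]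
    | tmul u v =>
        simp only [TensorProduct.map_tmul, cmLegL_apply, cmLegR_apply, hM₂]
        rw [E1 act hact_alg_one m hm, E2 act hact_alg_one m hm, cmAsm]

end keys
end CMaux

/-- The ℂ-linear lift `Δ̃ : H → H ⊗_ℂ H` of the coproduct of the
Connes–Moscovici Hopf algebroid is coassociative and is a unital algebra
homomorphism for the factorwise multiplication on `H ⊗_ℂ H`. -/
theorem cm_comul_coassoc_algHom
    {Q A : Type*} [Ring Q] [HopfAlgebra ℂ Q] [Ring A] [Algebra ℂ A]
    (act : Q →ₗ[ℂ] A →ₗ[ℂ] A)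
    (hact_one : ∀ a : A, act 1 a = a)
    (hact_mul : ∀ (q q' : Q) (a : A), act (q * q') a = act q (act q' a))
    (hact_alg_mul : ∀ (q : Q) (a a' : A),
      act q (a * a') =
        LinearMap.mul' ℂ A
          (TensorProduct.map (act.flip a) (act.flip a') (Coalgebra.comul (R := ℂ) q)))
    (hact_alg_one : ∀ q : Q, act q 1 = Coalgebra.counit (R := ℂ) q • (1 : A))
    -- the Connes–Moscovici multiplication on `H`:
    (m : (A ⊗[ℂ] (Q ⊗[ℂ] A)) →ₗ[ℂ] (A ⊗[ℂ] (Q ⊗[ℂ] A)) →ₗ[ℂ] (A ⊗[ℂ] (Q ⊗[ℂ] A)))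
    (hm : ∀ (a : A) (q : Q) (b a' : A) (q' : Q) (b' : A),
      m (a ⊗ₜ[ℂ] (q ⊗ₜ[ℂ] b)) (a' ⊗ₜ[ℂ] (q' ⊗ₜ[ℂ] b')) = cmMulRHS act a q b a' q' b')
    -- the factorwise multiplication on `H ⊗ H`:
    (M₂ : ((A ⊗[ℂ] (Q ⊗[ℂ] A)) ⊗[ℂ] (A ⊗[ℂ] (Q ⊗[ℂ] A))) →ₗ[ℂ]
          ((A ⊗[ℂ] (Q ⊗[ℂ] A)) ⊗[ℂ] (A ⊗[ℂ] (Q ⊗[ℂ] A))) →ₗ[ℂ]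
          ((A ⊗[ℂ] (Q ⊗[ℂ] A)) ⊗[ℂ] (A ⊗[ℂ] (Q ⊗[ℂ] A))))
    (hM₂ : ∀ x y z w : A ⊗[ℂ] (Q ⊗[ℂ] A),
      M₂ (x ⊗ₜ[ℂ] y) (z ⊗ₜ[ℂ] w) = (m x z) ⊗ₜ[ℂ] (m y w))
    -- the ℂ-linear lift `Δ̃` of the coproduct:
    (D : (A ⊗[ℂ] (Q ⊗[ℂ] A)) →ₗ[ℂ] (A ⊗[ℂ] (Q ⊗[ℂ] A)) ⊗[ℂ] (A ⊗[ℂ] (Q ⊗[ℂ] A)))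
    (hD : ∀ (a : A) (q : Q) (b : A),
      D (a ⊗ₜ[ℂ] (q ⊗ₜ[ℂ] b)) = cmComulRHS a q b) :
    -- coassociativity: `(Δ̃ ⊗ id) Δ̃ = (id ⊗ Δ̃) Δ̃`
    (∀ x : A ⊗[ℂ] (Q ⊗[ℂ] A),
      (TensorProduct.assoc ℂ (A ⊗[ℂ] (Q ⊗[ℂ] A)) (A ⊗[ℂ] (Q ⊗[ℂ] A)) (A ⊗[ℂ] (Q ⊗[ℂ] A)))
          ((LinearMap.rTensor (A ⊗[ℂ] (Q ⊗[ℂ] A)) D) (D x)) =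
        (LinearMap.lTensor (A ⊗[ℂ] (Q ⊗[ℂ] A)) D) (D x)) ∧
    -- multiplicativity for the factorwise product on `H ⊗ H`
    (∀ x y : A ⊗[ℂ] (Q ⊗[ℂ] A), D (m x y) = M₂ (D x) (D y)) ∧
    -- unitality
    D ((1 : A) ⊗ₜ[ℂ] ((1 : Q) ⊗ₜ[ℂ] (1 : A))) =
      ((1 : A) ⊗ₜ[ℂ] ((1 : Q) ⊗ₜ[ℂ] (1 : A))) ⊗ₜ[ℂ]
        ((1 : A) ⊗ₜ[ℂ] ((1 : Q) ⊗ₜ[ℂ] (1 : A))) := by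
  refine ⟨?_, ?_, ?_⟩
  · -- coassociativity
    have hL : ∀ (a b : A),
        (LinearMap.rTensor (A ⊗[ℂ] (Q ⊗[ℂ] A)) D) ∘ₗ
            TensorProduct.map (cmLegL a) (cmLegR b) =
          TensorProduct.map (TensorProduct.map (cmLegL a) (cmLegR 1)) (cmLegR b) ∘ₗ
            LinearMap.rTensor Q (Coalgebra.comul (R := ℂ)) := by
      intro a b; ext x y
      simp [hD, cmComulRHS]
    have hR : ∀ (a b : A),
        (LinearMap.lTensor (A ⊗[ℂ] (Q ⊗[ℂ] A)) D) ∘ₗ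
            TensorProduct.map (cmLegL a) (cmLegR b) =
          TensorProduct.map (cmLegL a) (TensorProduct.map (cmLegL 1) (cmLegR b)) ∘ₗ
            LinearMap.lTensor Q (Coalgebra.comul (R := ℂ)) := by
      intro a b; ext x y
      simp [hD, cmComulRHS]
    have key : ∀ (a : A) (q : Q) (b : A),
        (TensorProduct.assoc ℂ (A ⊗[ℂ] (Q ⊗[ℂ] A)) (A ⊗[ℂ] (Q ⊗[ℂ] A)) (A ⊗[ℂ] (Q ⊗[ℂ] A)))
            ((LinearMap.rTensor (A ⊗[ℂ] (Q ⊗[ℂ] A)) D) (D (a ⊗ₜ[ℂ] (q ⊗ₜ[ℂ] b)))) =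
          (LinearMap.lTensor (A ⊗[ℂ] (Q ⊗[ℂ] A)) D) (D (a ⊗ₜ[ℂ] (q ⊗ₜ[ℂ] b))) := by
      intro a q b
      rw [hD]
      unfold cmComulRHS
      rw [← LinearMap.comp_apply, hL a b, LinearMap.comp_apply,
        ← TensorProduct.map_map_assoc, Coalgebra.coassoc_apply,
        ← LinearMap.comp_apply (f := LinearMap.lTensor _ D), hR a b, LinearMap.comp_apply,
        CMaux.cmLegR_one]
    intro x
    induction x using TensorProduct.induction_on with
    | zero => simp
    | tmul a t =>
      induction t using TensorProduct.induction_on with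
      | zero => rw [tmul_zero]; simp
      | tmul q b => exact key a q b
      | add t₁ t₂ h₁ h₂ => simp only [tmul_add, map_add, h₁, h₂]
    | add x₁ x₂ h₁ h₂ => simp only [map_add, h₁, h₂]
  · -- multiplicativity
    have key : ∀ (a : A) (q : Q) (b a' : A) (q' : Q) (b' : A),
        D (m (a ⊗ₜ[ℂ] (q ⊗ₜ[ℂ] b)) (a' ⊗ₜ[ℂ] (q' ⊗ₜ[ℂ] b'))) =
          M₂ (D (a ⊗ₜ[ℂ] (q ⊗ₜ[ℂ] b))) (D (a' ⊗ₜ[ℂ] (q' ⊗ₜ[ℂ] b'))) := by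
      intro a q b a' q' b'
      rw [hm, hD, hD]
      unfold cmComulRHS
      rw [CMaux.RHSkey act hact_alg_one m hm M₂ hM₂,
        CMaux.LHSkey act D hD]
    have main : m.compr₂ D = (M₂.comp D).compl₂ D := by
      ext a q b a' q' b'
      simpa using key a q b a' q' b'
    intro x y
    simpa using LinearMap.congr_fun (LinearMap.congr_fun main x) y
  · -- unitality
    rw [hD]
    unfold cmComulRHS
    simp [Algebra.TensorProduct.one_def]
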